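/- arXiv:2209.06189 — 2 statements merged into one kernel-verified Lean document; each statement's English description precedes it below -/
import Mathlib

section
/- Let m ≥ 3, k ∈ {0, 1}, and let p be a real number with m/(m-k) < p < ∞. Then for every f ∈ L^p(ℝ^m), the function Q_k(f)(x) = ∫_0^1 t^{m-1-k} f(tx) dt is defined almost everywhere, belongs to L^p(ℝ^m), and satisfies ‖Q_k(f)‖_p ≤ (m(1 - 1/p) - k)^{-1} ‖f‖_p. -/
/-!
Write `t ^ a * f (t • x) = t ^ r * (t ^ (d / p) * f (t • x))` with `r = a - d / p > -1`, where
`d` is the dimension. Hölder's inequality against the finite measure `t ^ r dt` on `(0, 1]`, of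
mass `W = (r + 1)⁻¹`, bounds `|Q f x| ^ p` by `W ^ (p - 1) * ∫ t ^ r * t ^ d * |f (t • x)| ^ p dt`.
Integrating in `x` first, the dilation `x ↦ t • x` contributes `t ^ (-d)`, which cancels `t ^ d`,
so `‖Q f‖_p ^ p ≤ W ^ p * ‖f‖_p ^ p`. For `a = m - 1 - k` and `d = m`, `r + 1 = m (1 - 1/p) - k`.
-/
open MeasureTheory ENNReal Set Module

theorem lintegral_mul_rpow_le {α : Type*} [MeasurableSpace α] (μ : Measure α)
    {w h : α → ℝ≥0∞} (hw : Measurable w) (hh : Measurable h) {p : ℝ} (hp : 1 ≤ p) :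
    (∫⁻ a, w a * h a ∂μ) ^ p ≤ (∫⁻ a, w a * h a ^ p ∂μ) * (∫⁻ a, w a ∂μ) ^ (p - 1) := by
  have hp0 : 0 < p := zero_lt_one.trans_le hp
  have holder := eLpNorm'_le_eLpNorm'_mul_rpow_measure_univ (μ := μ.withDensity w)
    zero_lt_one hp hh.aestronglyMeasurable
  simp only [eLpNorm', enorm_eq_self, rpow_one, div_one, withDensity_apply _ MeasurableSet.univ,
    Measure.restrict_univ, lintegral_withDensity_eq_lintegral_mul _ hw hh,
    lintegral_withDensity_eq_lintegral_mul _ hw (hh.pow_const p)] at holder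
  calc (∫⁻ a, w a * h a ∂μ) ^ p
      ≤ ((∫⁻ a, w a * h a ^ p ∂μ) ^ (1 / p) * (∫⁻ a, w a ∂μ) ^ (1 - 1 / p)) ^ p :=
        rpow_le_rpow (by simpa using holder) hp0.le
    _ = _ := by
      rw [mul_rpow_of_nonneg _ _ hp0.le, ← rpow_mul, ← rpow_mul, one_div_mul_cancel hp0.ne',
        rpow_one, sub_mul, one_div_mul_cancel hp0.ne', one_mul]

theorem lintegral_rpow_Ioc_zero_one {r : ℝ} (hr : -1 < r) :
    ∫⁻ t in Ioc (0 : ℝ) 1, ENNReal.ofReal (t ^ r) = ENNReal.ofReal ((r + 1)⁻¹) := by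
  have hint : IntegrableOn (fun t : ℝ => t ^ r) (Ioc 0 1) :=
    (intervalIntegrable_iff_integrableOn_Ioc_of_le zero_le_one).mp
      (intervalIntegral.intervalIntegrable_rpow' hr)
  rw [← ofReal_integral_eq_lintegral_ofReal hint
    (ae_restrict_of_forall_mem measurableSet_Ioc fun t ht => Real.rpow_nonneg ht.1.le r),
    ← intervalIntegral.integral_of_le zero_le_one, integral_rpow (Or.inl hr), Real.one_rpow,
    Real.zero_rpow (by linarith), sub_zero, one_div]

section Dilation

variable {E : Type*} [NormedAddCommGroup E] [NormedSpace ℝ E] [FiniteDimensional ℝ E]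
  [MeasurableSpace E] [BorelSpace E] (μ : Measure E) [μ.IsAddHaarMeasure]

theorem lintegral_comp_smul_of_pos {h : E → ℝ≥0∞} (hh : Measurable h) {t : ℝ} (ht : 0 < t) :
    ∫⁻ x, h (t • x) ∂μ = ENNReal.ofReal ((t ^ finrank ℝ E)⁻¹) * ∫⁻ x, h x ∂μ := by
  rw [← lintegral_map hh (measurable_const_smul t), Measure.map_addHaar_smul μ ht.ne',
    lintegral_smul_measure, smul_eq_mul, abs_of_pos (by positivity)]

theorem lintegral_lintegral_comp_smul {h : E → ℝ≥0∞} (hh : Measurable h) {w : ℝ → ℝ≥0∞}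
    (hw : Measurable w) {s : Set ℝ} (hs : MeasurableSet s) (hs0 : s ⊆ Ioi 0) :
    ∫⁻ x, (∫⁻ t in s, w t * h (t • x)) ∂μ
      = (∫⁻ t in s, w t * ENNReal.ofReal ((t ^ finrank ℝ E)⁻¹)) * ∫⁻ x, h x ∂μ := by
  rw [lintegral_lintegral_swap (by fun_prop), ← lintegral_mul_const _ (by fun_prop)]
  refine setLIntegral_congr_fun hs fun t ht => ?_
  rw [lintegral_const_mul _ (by fun_prop), lintegral_comp_smul_of_pos μ hh (hs0 ht), mul_assoc]

theorem ae_ae_comp_smul_eq {F : Type*} {f g : E → F} (hfg : f =ᵐ[μ] g) {s : Set ℝ}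
    (hs : MeasurableSet s) (hs0 : s ⊆ Ioi 0) :
    ∀ᵐ x ∂μ, ∀ᵐ t ∂volume.restrict s, f (t • x) = g (t • x) := by
  obtain ⟨S, hfgS, hS, hS0⟩ := exists_measurable_superset_of_null (ae_iff.mp hfg)
  have hnull : ∫⁻ x, (∫⁻ t in s, 1 * S.indicator 1 (t • x)) ∂μ = 0 := by
    rw [lintegral_lintegral_comp_smul μ (measurable_one.indicator hS) measurable_const hs hs0,
      lintegral_indicator_one hS, hS0, mul_zero]
  filter_upwards [(lintegral_eq_zero_iff (by fun_prop)).mp hnull] with x hx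
  filter_upwards [(lintegral_eq_zero_iff (by fun_prop)).mp hx] with t ht
  by_contra hne
  simp [indicator_of_mem (hfgS hne)] at ht

theorem lintegral_hardy_dilation_rpow_le {h : E → ℝ≥0∞} (hh : Measurable h) {p a : ℝ}
    (hp : 1 ≤ p) (hr : -1 < a - finrank ℝ E / p) :
    ∫⁻ x, (∫⁻ t in Ioc 0 1, ENNReal.ofReal (t ^ a) * h (t • x)) ^ p ∂μ
      ≤ ENNReal.ofReal ((a - finrank ℝ E / p + 1)⁻¹) ^ p * ∫⁻ x, h x ^ p ∂μ := by
  set d := finrank ℝ E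
  set r := a - d / p
  have hp0 : 0 < p := zero_lt_one.trans_le hp
  set W := ENNReal.ofReal ((r + 1)⁻¹)
  have hW : ∫⁻ t in Ioc (0 : ℝ) 1, ENNReal.ofReal (t ^ r) = W := lintegral_rpow_Ioc_zero_one hr
  have hsplit : ∀ x, ∫⁻ t in Ioc 0 1, ENNReal.ofReal (t ^ a) * h (t • x)
      = ∫⁻ t in Ioc 0 1, ENNReal.ofReal (t ^ r) * (ENNReal.ofReal (t ^ (d / p)) * h (t • x)) :=
    fun x => setLIntegral_congr_fun measurableSet_Ioc fun t ht => by
      rw [← mul_assoc, ← ofReal_mul (Real.rpow_nonneg ht.1.le r), ← Real.rpow_add ht.1,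
        sub_add_cancel]
  have hpow : ∀ t ∈ Ioc (0 : ℝ) 1, ∀ y : ℝ≥0∞,
      ENNReal.ofReal (t ^ r) * (ENNReal.ofReal (t ^ (d / p)) * y) ^ p
        = ENNReal.ofReal (t ^ r) * ENNReal.ofReal (t ^ d) * y ^ p := fun t ht y => by
    rw [mul_rpow_of_nonneg _ _ hp0.le, ofReal_rpow_of_nonneg (Real.rpow_nonneg ht.1.le _) hp0.le,
      ← Real.rpow_mul ht.1.le, div_mul_cancel₀ _ hp0.ne', Real.rpow_natCast, mul_assoc]
  have hcancel : ∀ t ∈ Ioc (0 : ℝ) 1, ENNReal.ofReal (t ^ r) * ENNReal.ofReal (t ^ d)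
      * ENNReal.ofReal ((t ^ d)⁻¹) = ENNReal.ofReal (t ^ r) := fun t ht => by
    rw [mul_assoc, ← ofReal_mul (pow_nonneg ht.1.le d), mul_inv_cancel₀ (pow_pos ht.1 d).ne',
      ofReal_one, mul_one]
  calc ∫⁻ x, (∫⁻ t in Ioc 0 1, ENNReal.ofReal (t ^ a) * h (t • x)) ^ p ∂μ
      ≤ ∫⁻ x, (∫⁻ t in Ioc 0 1, ENNReal.ofReal (t ^ r)
          * (ENNReal.ofReal (t ^ (d / p)) * h (t • x)) ^ p) * W ^ (p - 1) ∂μ :=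
        lintegral_mono fun x => hsplit x ▸ hW ▸ lintegral_mul_rpow_le _ (by fun_prop)
          (by fun_prop) hp
    _ = (∫⁻ x, (∫⁻ t in Ioc 0 1, ENNReal.ofReal (t ^ r) * ENNReal.ofReal (t ^ d)
          * h (t • x) ^ p) ∂μ) * W ^ (p - 1) := by
        rw [lintegral_mul_const' _ _ (rpow_ne_top_of_nonneg (by linarith) ofReal_ne_top)]
        exact congrArg (· * _) (lintegral_congr fun x =>
          setLIntegral_congr_fun measurableSet_Ioc fun t ht => hpow t ht _)
    _ = W * (∫⁻ x, h x ^ p ∂μ) * W ^ (p - 1) := by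
        rw [lintegral_lintegral_comp_smul μ (hh.pow_const p) (by fun_prop) measurableSet_Ioc
          Ioc_subset_Ioi_self, setLIntegral_congr_fun measurableSet_Ioc hcancel, hW]
    _ = W ^ p * ∫⁻ x, h x ^ p ∂μ := by
        have hWp : W ^ p = W ^ (p - 1) * W := by
          simpa using ENNReal.rpow_add_of_nonneg (x := W) (p - 1) 1 (sub_nonneg.2 hp) zero_le_one
        rw [hWp, mul_right_comm, mul_comm W]

theorem eLpNorm_hardy_dilation_le {h : E → ℝ≥0∞} (hh : Measurable h) {p a : ℝ}
    (hp : 1 ≤ p) (hr : -1 < a - finrank ℝ E / p) :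
    eLpNorm (fun x => ∫⁻ t in Ioc 0 1, ENNReal.ofReal (t ^ a) * h (t • x)) (.ofReal p) μ
      ≤ ENNReal.ofReal ((a - finrank ℝ E / p + 1)⁻¹) * eLpNorm h (.ofReal p) μ := by
  have hp0 : 0 < p := zero_lt_one.trans_le hp
  simp only [eLpNorm_eq_lintegral_rpow_enorm_toReal (ofReal_ne_zero_iff.2 hp0) ofReal_ne_top,
    toReal_ofReal hp0.le, enorm_eq_self]
  calc _ ≤ (ENNReal.ofReal ((a - finrank ℝ E / p + 1)⁻¹) ^ p * ∫⁻ x, h x ^ p ∂μ) ^ (1 / p) :=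
        rpow_le_rpow (lintegral_hardy_dilation_rpow_le μ hh hp hr) (by positivity)
    _ = _ := by
        rw [mul_rpow_of_nonneg _ _ (by positivity), ← rpow_mul, mul_one_div_cancel hp0.ne',
          rpow_one]

theorem hardy_dilation_inequality {f : E → ℝ} {p a : ℝ} (hp : 1 ≤ p)
    (hr : -1 < a - finrank ℝ E / p) (hf : MemLp f (.ofReal p) μ) :
    (∀ᵐ x ∂μ, IntegrableOn (fun t : ℝ => t ^ a * f (t • x)) (Ioc 0 1)) ∧
    MemLp (fun x => ∫ t in Ioc 0 1, t ^ a * f (t • x)) (.ofReal p) μ ∧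
    eLpNorm (fun x => ∫ t in Ioc 0 1, t ^ a * f (t • x)) (.ofReal p) μ
      ≤ ENNReal.ofReal ((a - finrank ℝ E / p + 1)⁻¹) * eLpNorm f (.ofReal p) μ := by
  have hp0 : 0 < p := zero_lt_one.trans_le hp
  set g := hf.1.mk f
  have hg : Measurable g := hf.1.stronglyMeasurable_mk.measurable
  have hfg_dil := ae_ae_comp_smul_eq μ hf.1.ae_eq_mk (measurableSet_Ioc (b := 1))
    Ioc_subset_Ioi_self
  set Φ := fun x => ∫⁻ t in Ioc 0 1, ENNReal.ofReal (t ^ a) * ‖g (t • x)‖ₑ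
  have hΦ_eq : ∀ x, ∫⁻ t in Ioc 0 1, ‖t ^ a * g (t • x)‖ₑ = Φ x := fun x =>
    setLIntegral_congr_fun measurableSet_Ioc fun t ht => by
      rw [enorm_mul, Real.enorm_of_nonneg (Real.rpow_nonneg ht.1.le a)]
  have hΦ : eLpNorm Φ (.ofReal p) μ
      ≤ ENNReal.ofReal ((a - finrank ℝ E / p + 1)⁻¹) * eLpNorm f (.ofReal p) μ := by
    have := eLpNorm_hardy_dilation_le μ hg.enorm hp hr
    rwa [eLpNorm_enorm, ← eLpNorm_congr_ae hf.1.ae_eq_mk] at this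
  have hΦ_fin : ∀ᵐ x ∂μ, Φ x < ⊤ := by
    have := lintegral_rpow_enorm_lt_top_of_eLpNorm_lt_top (ofReal_ne_zero_iff.2 hp0)
      ofReal_ne_top (hΦ.trans_lt (mul_lt_top ofReal_lt_top hf.2))
    filter_upwards [ae_lt_top' (by fun_prop) this.ne] with x hx
    rw [enorm_eq_self, toReal_ofReal hp0.le] at hx
    exact (rpow_lt_top_iff_of_pos hp0).mp hx
  have hQ : (fun x => ∫ t in Ioc 0 1, t ^ a * f (t • x))
      =ᵐ[μ] fun x => ∫ t in Ioc 0 1, t ^ a * g (t • x) := by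
    filter_upwards [hfg_dil] with x hx
    exact integral_congr_ae (hx.mono fun t ht => congrArg (t ^ a * ·) ht)
  have hQ_le : eLpNorm (fun x => ∫ t in Ioc 0 1, t ^ a * f (t • x)) (.ofReal p) μ
      ≤ ENNReal.ofReal ((a - finrank ℝ E / p + 1)⁻¹) * eLpNorm f (.ofReal p) μ := by
    refine (eLpNorm_congr_ae hQ).trans_le ((eLpNorm_mono_enorm fun x => ?_).trans hΦ)
    exact (enorm_integral_le_lintegral_enorm _).trans_eq (hΦ_eq x)
  refine ⟨?_, ⟨?_, hQ_le.trans_lt (mul_lt_top ofReal_lt_top hf.2)⟩, hQ_le⟩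
  · filter_upwards [hΦ_fin, hfg_dil] with x hx hfgx
    refine Integrable.congr ⟨by fun_prop, (hΦ_eq x).trans_lt hx⟩ ?_
    filter_upwards [hfgx] with t ht
    rw [ht]
  · refine AEStronglyMeasurable.congr ?_ hQ.symm
    exact (StronglyMeasurable.integral_prod_right'
      (f := fun z : E × ℝ => z.2 ^ a * g (z.2 • z.1)) (by fun_prop)).aestronglyMeasurable

end Dilation

/-- For `m ≥ 3`, `k ∈ {0,1}`, `m/(m-k) < p < ∞` and `f ∈ L^p(ℝ^m)`, the
function `Q_k(f)(x) = ∫_0^1 t^(m-1-k) f(tx) dt` is defined a.e. (the integrand is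
integrable for a.e. `x`), belongs to `L^p`, and `‖Q_k f‖_p ≤ (m(1-1/p)-k)⁻¹ ‖f‖_p`. -/
theorem stmt1 (m : ℕ) (hm : 3 ≤ m) (k : ℕ) (hk : k = 0 ∨ k = 1) (p : ℝ)
    (hp : (m : ℝ) / ((m : ℝ) - k) < p)
    (f : EuclideanSpace ℝ (Fin m) → ℝ)
    (hf : MemLp f (ENNReal.ofReal p) volume) :
    (∀ᵐ x : EuclideanSpace ℝ (Fin m), IntegrableOn
        (fun t : ℝ => t ^ (m - 1 - k) * f (t • x)) (Set.Ioc 0 1) volume) ∧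
    MemLp (fun x : EuclideanSpace ℝ (Fin m) =>
        ∫ t in (0:ℝ)..1, t ^ (m - 1 - k) * f (t • x)) (ENNReal.ofReal p) volume ∧
    eLpNorm (fun x : EuclideanSpace ℝ (Fin m) =>
        ∫ t in (0:ℝ)..1, t ^ (m - 1 - k) * f (t • x)) (ENNReal.ofReal p) volume
      ≤ ENNReal.ofReal (((m : ℝ) * (1 - 1 / p) - k)⁻¹) *
          eLpNorm f (ENNReal.ofReal p) volume := by
  have hkm : 1 + k ≤ m := by omega
  have hmk : (0 : ℝ) < m - k := sub_pos.2 (by exact_mod_cast (by omega : k < m))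
  have hp1 : 1 ≤ p := ((one_le_div hmk).2 (by linarith [k.cast_nonneg (α := ℝ)])).trans hp.le
  have hconst : 0 < (m : ℝ) * (1 - 1 / p) - k := by
    have : (m : ℝ) / p < m - k :=
      (div_lt_iff₀ (by linarith)).2 (by linarith [(div_lt_iff₀ hmk).1 hp])
    rw [mul_one_sub, mul_one_div]
    linarith
  have hexp : ((m - 1 - k : ℕ) : ℝ) - finrank ℝ (EuclideanSpace ℝ (Fin m)) / p + 1
      = m * (1 - 1 / p) - k := by
    rw [finrank_euclideanSpace_fin, Nat.sub_sub, Nat.cast_sub hkm]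
    push_cast
    ring
  have hr : -1 < ((m - 1 - k : ℕ) : ℝ) - finrank ℝ (EuclideanSpace ℝ (Fin m)) / p := by
    linarith
  obtain ⟨hint, hmem, hnorm⟩ := hardy_dilation_inequality volume hp1 hr hf
  simp only [Real.rpow_natCast, hexp] at hint hmem hnorm
  simp only [intervalIntegral.integral_of_le zero_le_one]
  exact ⟨hint, hmem, hnorm⟩
end

section
/- Let m ≥ 3, let ζ ∈ C^∞(ℝ) satisfy ζ(t) = 1 for t ≤ 1 and ζ(t) = 0 for t ≥ 2, let z_R(x) = ζ(R^{-1} log(|x|² + 1)), and let f : ℝ^m → ℝ^m be continuously differentiable. Define the Kato approximation f_R componentwise by (f_R)_j(x) = z_R(x) f_j(x) + Σ_{i=1}^m ∂_{x_i} z_R(x) (x_i Q_1(f)_j(x) - x_j Q_1(f)_i(x)). Then the divergence of f_R satisfies ∇·f_R(x) = z_R(x) (∇·f)(x) + (x · ∇z_R(x)) Q_0(∇·f)(x) for all x ∈ ℝ^m. -/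
open MeasureTheory

/-- The Kato cutoff `z_R(x) = ζ(R⁻¹ log(|x|²+1))`. -/
noncomputable def katoZ (ζ : ℝ → ℝ) (R : ℝ) {m : ℕ}
    (x : EuclideanSpace ℝ (Fin m)) : ℝ :=
  ζ (R⁻¹ * Real.log (‖x‖ ^ 2 + 1))

/-- `Q_k(f)(x) = ∫_0^1 t^(m-1-k) f(tx) dt` for a scalar function `f` on `ℝ^m`. -/
noncomputable def katoQ (m k : ℕ) (f : EuclideanSpace ℝ (Fin m) → ℝ)
    (x : EuclideanSpace ℝ (Fin m)) : ℝ :=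
  ∫ t in (0:ℝ)..1, t ^ (m - 1 - k) * f (t • x)

/-- The divergence `∇·f = Σ_i ∂_i f_i` of a vector field on `ℝ^m`. -/
noncomputable def diverg {m : ℕ}
    (f : EuclideanSpace ℝ (Fin m) → EuclideanSpace ℝ (Fin m))
    (x : EuclideanSpace ℝ (Fin m)) : ℝ :=
  ∑ i, fderiv ℝ f x (EuclideanSpace.single i 1) i

/-- Kato's approximation
`(f_R)_j = z_R f_j + Σ_i ∂_i z_R (x_i Q_1(f)_j - x_j Q_1(f)_i)`. -/
noncomputable def katoApprox (ζ : ℝ → ℝ) (R : ℝ) {m : ℕ}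
    (f : EuclideanSpace ℝ (Fin m) → EuclideanSpace ℝ (Fin m))
    (x : EuclideanSpace ℝ (Fin m)) : EuclideanSpace ℝ (Fin m) :=
  (WithLp.equiv 2 (Fin m → ℝ)).symm fun j =>
    katoZ ζ R x * f x j +
      ∑ i, fderiv ℝ (katoZ ζ R) x (EuclideanSpace.single i 1) *
        (x i * katoQ m 1 (fun y => f y j) x - x j * katoQ m 1 (fun y => f y i) x)

section Aux

open intervalIntegral Set

variable {m : ℕ}
local notation "E" => EuclideanSpace ℝ (Fin m)

lemma aux_sum_single (x : E) : ∑ i, x i • EuclideanSpace.single i (1:ℝ) = x := by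
  ext j
  rw [WithLp.ofLp_sum, Finset.sum_apply]
  simp [EuclideanSpace.single_apply, mul_comm]

lemma aux_smooth_z (ζ : ℝ → ℝ) (hζ : ContDiff ℝ (⊤ : ℕ∞) ζ) (R : ℝ) :
    ContDiff ℝ (⊤ : ℕ∞) (katoZ ζ R (m := m)) := by
  apply hζ.comp
  apply ContDiff.mul contDiff_const
  apply ContDiff.log
  · exact contDiff_norm_sq ℝ |>.add contDiff_const
  · intro x; positivity

lemma aux_hasDerivAt_line (g : E → ℝ) (hg : Differentiable ℝ g) (x : E) (t : ℝ) :
    HasDerivAt (fun s : ℝ => g (s • x)) (fderiv ℝ g (t • x) x) t := by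
  have h1 : HasDerivAt (fun s : ℝ => s • x) x t := by
    simpa using (hasDerivAt_id t).smul_const x
  exact (hg (t • x)).hasFDerivAt.comp_hasDerivAt t h1

lemma aux_hasFDerivAt_pt (g : E → ℝ) (hg : Differentiable ℝ g) (n : ℕ) (t : ℝ) (x : E) :
    HasFDerivAt (fun y : E => t ^ n * g (t • y)) ((t ^ (n+1)) • fderiv ℝ g (t • x)) x := by
  have h1 : HasFDerivAt (fun y : E => t • y) (t • ContinuousLinearMap.id ℝ _) x := by
    exact (t • ContinuousLinearMap.id ℝ (EuclideanSpace ℝ (Fin m))).hasFDerivAt (x := x)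
  have h2 : HasFDerivAt (fun y : E => t ^ n * g (t • y)) (t ^ n • ((fderiv ℝ g (t • x)).comp (t • ContinuousLinearMap.id ℝ E))) x := ((hg (t • x)).hasFDerivAt.comp x h1).const_mul (t ^ n)
  convert h2 using 1
  ext v
  simp [mul_comm, pow_succ]
  ring

lemma aux_Q_hasFDerivAt (n : ℕ) (g : E → ℝ) (hg : ContDiff ℝ 1 g) (x₀ : E) :
    HasFDerivAt (fun x : E => ∫ t in (0:ℝ)..1, t ^ n * g (t • x))
      (∫ t in (0:ℝ)..1, (t ^ (n+1)) • fderiv ℝ g (t • x₀)) x₀ := by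
  have hgd : Differentiable ℝ g := hg.differentiable one_ne_zero
  have hgc : Continuous g := hg.continuous
  have hdc : Continuous (fderiv ℝ g) := hg.continuous_fderiv one_ne_zero
  obtain ⟨C, hC⟩ := (isCompact_closedBall (0 : E) (‖x₀‖ + 1)).exists_bound_of_continuousOn
    (hdc.continuousOn (s := Metric.closedBall 0 (‖x₀‖+1)))
  apply hasFDerivAt_integral_of_dominated_of_fderiv_le (s := Metric.ball x₀ 1)
    (F' := fun x t => (t ^ (n+1)) • fderiv ℝ g (t • x)) (bound := fun _ => C) (Metric.ball_mem_nhds x₀ one_pos)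
  · filter_upwards with x
    exact ((continuous_pow n).mul
      (hgc.comp (continuous_id.smul continuous_const))).aestronglyMeasurable
  · exact ((continuous_pow n).mul
      (hgc.comp (continuous_id.smul continuous_const))).intervalIntegrable _ _
  · exact ((continuous_pow (n+1)).smul
      (hdc.comp (continuous_id.smul continuous_const))).aestronglyMeasurable
  · filter_upwards with t ht x hx
    rw [Set.uIoc_of_le (by norm_num : (0:ℝ) ≤ 1)] at ht
    have h1 : ‖t ^ (n+1)‖ ≤ 1 := by
      rw [Real.norm_eq_abs, abs_pow]
      exact pow_le_one₀ (abs_nonneg t) (by rw [abs_le]; constructor <;> nlinarith [ht.1, ht.2])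
    have h2 : t • x ∈ Metric.closedBall (0 : E) (‖x₀‖ + 1) := by
      rw [Metric.mem_closedBall, dist_zero_right, norm_smul]
      have h3 : ‖x‖ ≤ ‖x₀‖ + 1 := by
        have := mem_ball_iff_norm.mp hx
        calc ‖x‖ ≤ ‖x₀‖ + ‖x - x₀‖ := by
              simpa [add_comm] using norm_add_le (x - x₀) x₀
          _ ≤ ‖x₀‖ + 1 := by linarith
      calc ‖t‖ * ‖x‖ ≤ 1 * (‖x₀‖ + 1) := by
            apply mul_le_mul _ h3 (norm_nonneg _) zero_le_one
            rw [Real.norm_eq_abs, abs_le]; constructor <;> nlinarith [ht.1, ht.2]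
        _ = ‖x₀‖ + 1 := one_mul _
    calc ‖t ^ (n+1) • fderiv ℝ g (t • x)‖ = ‖t ^ (n+1)‖ * ‖fderiv ℝ g (t • x)‖ := norm_smul _ _
      _ ≤ 1 * C := mul_le_mul h1 (hC _ h2) (norm_nonneg _) zero_le_one
      _ = C := one_mul _
  · exact intervalIntegrable_const
  · filter_upwards with t ht x hx
    exact aux_hasFDerivAt_pt g hgd n t x

lemma aux_CLM_integral_apply (φ : ℝ → (E →L[ℝ] ℝ)) (hφ : Continuous φ) (v : E) :
    (∫ t in (0:ℝ)..1, φ t) v = ∫ t in (0:ℝ)..1, φ t v := by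
  rw [intervalIntegral.integral_of_le (by norm_num : (0:ℝ) ≤ 1),
      intervalIntegral.integral_of_le (by norm_num : (0:ℝ) ≤ 1)]
  rw [ContinuousLinearMap.integral_apply (hφ.integrableOn_Ioc)]

lemma aux_ibp (n : ℕ) (hn : 1 ≤ n) (g : E → ℝ) (hg : ContDiff ℝ 1 g) (x : E) :
    ∫ t in (0:ℝ)..1, t ^ n * fderiv ℝ g (t • x) x
      = g x - n * ∫ t in (0:ℝ)..1, t ^ (n-1) * g (t • x) := by
  have hgd : Differentiable ℝ g := hg.differentiable one_ne_zero
  have hgc : Continuous fun t : ℝ => g (t • x) :=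
    hg.continuous.comp (continuous_id.smul continuous_const)
  have hdc : Continuous fun t : ℝ => fderiv ℝ g (t • x) x :=
    (ContinuousLinearMap.apply ℝ ℝ x).continuous.comp
      ((hg.continuous_fderiv one_ne_zero).comp (continuous_id.smul continuous_const))
  have key := intervalIntegral.integral_deriv_mul_eq_sub_of_hasDerivAt
    (u := fun t : ℝ => t ^ n) (v := fun t : ℝ => g (t • x))
    (u' := fun t : ℝ => n * t ^ (n-1)) (v' := fun t : ℝ => fderiv ℝ g (t • x) x)
    (a := 0) (b := 1)
    ((continuous_pow n).continuousOn) (hgc.continuousOn)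
    (fun t _ => hasDerivAt_pow n t) (fun t _ => aux_hasDerivAt_line g hgd x t)
    (((continuous_const.mul (continuous_pow (n-1)))).intervalIntegrable _ _)
    (hdc.intervalIntegrable _ _)
  rw [intervalIntegral.integral_add
      (((continuous_const.fun_mul (continuous_pow (n-1))).fun_mul hgc).intervalIntegrable 0 1)
      (((continuous_pow n).fun_mul hdc).intervalIntegrable 0 1)] at key
  have hz : ((0:ℝ)) ^ n * g ((0:ℝ) • x) = 0 := by
    rw [zero_pow (by omega), zero_mul]
  rw [one_pow, one_smul, hz, sub_zero] at key
  have h4 : ∫ t in (0:ℝ)..1, (n : ℝ) * t ^ (n-1) * g (t • x)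
      = n * ∫ t in (0:ℝ)..1, t ^ (n-1) * g (t • x) := by
    rw [← intervalIntegral.integral_const_mul]
    congr 1; ext t; ring
  linarith [key, h4]

lemma aux_zi_contDiff (z : E → ℝ) (hz : ContDiff ℝ (⊤ : ℕ∞) z) (w : E) :
    ContDiff ℝ (⊤ : ℕ∞) (fun y : E => fderiv ℝ z y w) :=
  (hz.fderiv_right (by simp)).clm_apply contDiff_const

lemma aux_snd_fderiv (z : E → ℝ) (hz : ContDiff ℝ (⊤ : ℕ∞) z) (x w v : E) :
    fderiv ℝ (fun y : E => fderiv ℝ z y w) x v = fderiv ℝ (fderiv ℝ z) x v w := by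
  have h := fderiv_clm_apply (c := fderiv ℝ z) (u := fun _ : E => w)
    ((hz.fderiv_right (m := (⊤ : ℕ∞)) (by simp)).differentiable (by simp) x) (differentiableAt_const w)
  rw [h]; simp

lemma aux_symm (z : E → ℝ) (hz : ContDiff ℝ (⊤ : ℕ∞) z) (x v w : E) :
    fderiv ℝ (fderiv ℝ z) x v w = fderiv ℝ (fderiv ℝ z) x w v :=
  (hz.contDiffAt.isSymmSndFDerivAt (by rw [minSmoothness_of_isRCLikeNormedField]; exact WithTop.coe_le_coe.mpr (le_top : (2:ℕ∞) ≤ ⊤))) v w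

end Aux

section Main


/-- `∇·f_R = z_R ∇·f + (x·∇z_R) Q_0(∇·f)`. -/
theorem stmt3 (m : ℕ) (hm : 3 ≤ m) (ζ : ℝ → ℝ) (hζ : ContDiff ℝ (⊤ : ℕ∞) ζ)
    (hζ1 : ∀ t : ℝ, t ≤ 1 → ζ t = 1) (hζ2 : ∀ t : ℝ, 2 ≤ t → ζ t = 0)
    (R : ℝ) (hR : 0 < R)
    (f : EuclideanSpace ℝ (Fin m) → EuclideanSpace ℝ (Fin m))
    (hf : ContDiff ℝ 1 f) (x : EuclideanSpace ℝ (Fin m)) :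
    diverg (katoApprox ζ R f) x
      = katoZ ζ R x * diverg f x +
        (∑ i, x i * fderiv ℝ (katoZ ζ R) x (EuclideanSpace.single i 1)) *
          katoQ m 0 (diverg f) x := by
  classical
  have hm1 : m - 1 - 1 + 1 = m - 1 := by omega
  set z : EuclideanSpace ℝ (Fin m) → ℝ := katoZ ζ R with hzdef
  have hzsm : ContDiff ℝ (⊤ : ℕ∞) z := aux_smooth_z ζ hζ R
  set e : Fin m → EuclideanSpace ℝ (Fin m) := fun i => (EuclideanSpace.single i (1:ℝ) : EuclideanSpace ℝ (Fin m)) with hedef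
  have hgC : ∀ i, ContDiff ℝ 1 (fun y : EuclideanSpace ℝ (Fin m) => f y i) := fun i =>
    (EuclideanSpace.proj (𝕜 := ℝ) i).contDiff.comp hf
  have hfd : ∀ y : EuclideanSpace ℝ (Fin m), DifferentiableAt ℝ f y := fun y => (hf.differentiable one_ne_zero).differentiableAt
  have hproj : ∀ (i : Fin m) (y : EuclideanSpace ℝ (Fin m)),
      HasFDerivAt (fun w : EuclideanSpace ℝ (Fin m) => w i) (EuclideanSpace.proj (𝕜 := ℝ) i) y :=
    fun i y => (EuclideanSpace.proj (𝕜 := ℝ) i).hasFDerivAt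
  have hcoordf : ∀ (j : Fin m) (y v : EuclideanSpace ℝ (Fin m)),
      fderiv ℝ (fun w : EuclideanSpace ℝ (Fin m) => f w j) y v = fderiv ℝ f y v j := by
    intro j y v
    have h := ((EuclideanSpace.proj (𝕜 := ℝ) j).hasFDerivAt.comp y (hfd y).hasFDerivAt).fderiv
    calc fderiv ℝ (fun w : EuclideanSpace ℝ (Fin m) => f w j) y v
        = ((EuclideanSpace.proj (𝕜 := ℝ) j).comp (fderiv ℝ f y)) v := by rw [← h]; rfl
      _ = fderiv ℝ f y v j := rfl
  have hdiv : ∀ y : EuclideanSpace ℝ (Fin m), diverg f y = ∑ j, fderiv ℝ (fun w : EuclideanSpace ℝ (Fin m) => f w j) y (e j) := by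
    intro y
    exact Finset.sum_congr rfl fun j _ => (hcoordf j y (e j)).symm
  -- the derivative of Q₁ applied to each component
  set QL : Fin m → EuclideanSpace ℝ (Fin m) → (EuclideanSpace ℝ (Fin m) →L[ℝ] ℝ) := fun i y =>
    ∫ t in (0:ℝ)..1, (t ^ (m - 1 - 1 + 1)) • fderiv ℝ (fun w : EuclideanSpace ℝ (Fin m) => f w i) (t • y) with hQLdef
  have hQ : ∀ (i : Fin m) (y : EuclideanSpace ℝ (Fin m)), HasFDerivAt (katoQ m 1 (fun w : EuclideanSpace ℝ (Fin m) => f w i)) (QL i y) y :=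
    fun i y => aux_Q_hasFDerivAt (m - 1 - 1) (fun w : EuclideanSpace ℝ (Fin m) => f w i) (hgC i) y
  have hQcont : ∀ i : Fin m, Continuous fun t : ℝ =>
      (t ^ (m - 1 - 1 + 1)) • fderiv ℝ (fun w : EuclideanSpace ℝ (Fin m) => f w i) (t • x) :=
    fun i => (continuous_pow _).smul
      (((hgC i).continuous_fderiv one_ne_zero).comp (continuous_id.smul continuous_const))
  have hQLapply : ∀ (i : Fin m) (v : EuclideanSpace ℝ (Fin m)), QL i x v
      = ∫ t in (0:ℝ)..1, t ^ (m-1) * fderiv ℝ (fun w : EuclideanSpace ℝ (Fin m) => f w i) (t • x) v := by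
    intro i v
    rw [hQLdef]
    rw [aux_CLM_integral_apply _ (hQcont i) v]
    simp only [hm1, ContinuousLinearMap.smul_apply, smul_eq_mul]
  have hdircont : ∀ (i : Fin m) (v : EuclideanSpace ℝ (Fin m)), Continuous fun t : ℝ =>
      t ^ (m-1) * fderiv ℝ (fun w : EuclideanSpace ℝ (Fin m) => f w i) (t • x) v :=
    fun i v => (continuous_pow _).mul ((ContinuousLinearMap.apply ℝ ℝ v).continuous.comp
      (((hgC i).continuous_fderiv one_ne_zero).comp (continuous_id.smul continuous_const)))
  -- key identity (c)
  have hc : ∑ j, QL j x (e j) = katoQ m 0 (diverg f) x := by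
    rw [Finset.sum_congr rfl fun j _ => hQLapply j (e j)]
    rw [← intervalIntegral.integral_finset_sum
      (fun j _ => (hdircont j (e j)).intervalIntegrable 0 1)]
    unfold katoQ
    simp only [Nat.sub_zero]
    congr 1
    ext t
    rw [hdiv (t • x), Finset.mul_sum]
  -- key identity (d)
  have hd : ∀ i : Fin m, ∑ j, x j * QL i x (e j)
      = f x i - (m-1 : ℕ) * katoQ m 1 (fun w : EuclideanSpace ℝ (Fin m) => f w i) x := by
    intro i
    have h1 : ∀ j : Fin m, x j * QL i x (e j)
        = ∫ t in (0:ℝ)..1, t ^ (m-1) * (x j * fderiv ℝ (fun w : EuclideanSpace ℝ (Fin m) => f w i) (t • x) (e j)) := by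
      intro j
      rw [hQLapply i (e j), ← intervalIntegral.integral_const_mul]
      congr 1; ext t; ring
    rw [Finset.sum_congr rfl fun j _ => h1 j]
    rw [← intervalIntegral.integral_finset_sum (fun j _ => by
      have := ((continuous_const.mul ((ContinuousLinearMap.apply ℝ ℝ (e j)).continuous.comp
        (((hgC i).continuous_fderiv one_ne_zero).comp (continuous_id.smul continuous_const)))) :
          Continuous fun t : ℝ => x j * fderiv ℝ (fun w : EuclideanSpace ℝ (Fin m) => f w i) (t • x) (e j))
      exact ((continuous_pow (m-1)).mul this).intervalIntegrable 0 1)]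
    have h3 : ∀ t : ℝ, ∑ j, t ^ (m-1) * (x j * fderiv ℝ (fun w : EuclideanSpace ℝ (Fin m) => f w i) (t • x) (e j))
        = t ^ (m-1) * fderiv ℝ (fun w : EuclideanSpace ℝ (Fin m) => f w i) (t • x) x := by
      intro t
      rw [← Finset.mul_sum]
      congr 1
      calc ∑ j, x j * (fderiv ℝ (fun w : EuclideanSpace ℝ (Fin m) => f w i) (t • x)) (e j)
          = ∑ j, (fderiv ℝ (fun w : EuclideanSpace ℝ (Fin m) => f w i) (t • x))
              (x j • EuclideanSpace.single j (1:ℝ)) := by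
            refine Finset.sum_congr rfl fun j _ => ?_
            rw [ContinuousLinearMap.map_smul]
            simp [hedef]
        _ = (fderiv ℝ (fun w : EuclideanSpace ℝ (Fin m) => f w i) (t • x))
              (∑ j, x j • EuclideanSpace.single j (1:ℝ)) := (map_sum _ _ _).symm
        _ = (fderiv ℝ (fun w : EuclideanSpace ℝ (Fin m) => f w i) (t • x)) x := by
            rw [aux_sum_single]
    rw [intervalIntegral.integral_congr (fun t _ => h3 t)]
    rw [aux_ibp (m-1) (by omega) (fun w : EuclideanSpace ℝ (Fin m) => f w i) (hgC i) x]
    rfl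
  -- second derivatives of z
  set Z2 : Fin m → (EuclideanSpace ℝ (Fin m) →L[ℝ] ℝ) := fun i => fderiv ℝ (fun y : EuclideanSpace ℝ (Fin m) => fderiv ℝ z y (e i)) x
    with hZ2def
  have hZ : ∀ i, HasFDerivAt (fun y : EuclideanSpace ℝ (Fin m) => fderiv ℝ z y (e i)) (Z2 i) x := fun i =>
    (((aux_zi_contDiff z hzsm (e i)).differentiable (by simp)) x).hasFDerivAt
  have hsymm : ∀ i j, Z2 i (e j) = Z2 j (e i) := by
    intro i j
    rw [hZ2def]
    simp only []
    rw [aux_snd_fderiv z hzsm x (e i) (e j), aux_symm z hzsm x (e j) (e i),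
      ← aux_snd_fderiv z hzsm x (e j) (e i)]
  -- derivative of each component of katoApprox
  have hzx : HasFDerivAt z (fderiv ℝ z x) x := ((hzsm.differentiable (by simp)) x).hasFDerivAt
  have hfj : ∀ j, HasFDerivAt (fun w : EuclideanSpace ℝ (Fin m) => f w j) (fderiv ℝ (fun w : EuclideanSpace ℝ (Fin m) => f w j) x) x :=
    fun j => ((hgC j).differentiable one_ne_zero x).hasFDerivAt
  set D : Fin m → (EuclideanSpace ℝ (Fin m) →L[ℝ] ℝ) := fun j =>
    (z x • fderiv ℝ (fun w : EuclideanSpace ℝ (Fin m) => f w j) x + f x j • fderiv ℝ z x) +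
    ∑ i, (fderiv ℝ z x (e i) •
        ((x i • QL j x + katoQ m 1 (fun w : EuclideanSpace ℝ (Fin m) => f w j) x • (EuclideanSpace.proj (𝕜 := ℝ) i)) -
          (x j • QL i x + katoQ m 1 (fun w : EuclideanSpace ℝ (Fin m) => f w i) x • (EuclideanSpace.proj (𝕜 := ℝ) j))) +
      (x i * katoQ m 1 (fun w : EuclideanSpace ℝ (Fin m) => f w j) x - x j * katoQ m 1 (fun w : EuclideanSpace ℝ (Fin m) => f w i) x) • Z2 i)
    with hDdef
  have H : ∀ j, HasFDerivAt (fun y : EuclideanSpace ℝ (Fin m) => katoApprox ζ R f y j) (D j) x := by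
    intro j
    have He : (fun y : EuclideanSpace ℝ (Fin m) => katoApprox ζ R f y j)
        = (fun y : EuclideanSpace ℝ (Fin m) => z y * f y j + ∑ i, fderiv ℝ z y (e i) *
            (y i * katoQ m 1 (fun w : EuclideanSpace ℝ (Fin m) => f w j) y - y j * katoQ m 1 (fun w : EuclideanSpace ℝ (Fin m) => f w i) y)) :=
      rfl
    rw [He, hDdef]
    exact (hzx.fun_mul (hfj j)).fun_add (HasFDerivAt.fun_sum fun i _ =>
      ((hZ i).fun_mul (((hproj i x).fun_mul (hQ j x)).fun_sub ((hproj j x).fun_mul (hQ i x)))))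
  -- differentiability of katoApprox and reduction of divergence to components
  have hkd : DifferentiableAt ℝ (katoApprox ζ R f) x := by
    have hF : DifferentiableAt ℝ (fun y : EuclideanSpace ℝ (Fin m) => (fun j => katoApprox ζ R f y j)) x :=
      differentiableAt_pi.mpr fun j => (H j).differentiableAt
    exact ((PiLp.continuousLinearEquiv 2 ℝ (fun _ : Fin m => ℝ)).symm.differentiableAt).comp x hF
  have hstart : diverg (katoApprox ζ R f) x = ∑ j, D j (e j) := by
    unfold diverg
    refine Finset.sum_congr rfl fun j _ => ?_
    have h := ((EuclideanSpace.proj (𝕜 := ℝ) j).hasFDerivAt.comp x hkd.hasFDerivAt).fderiv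
    calc fderiv ℝ (katoApprox ζ R f) x (EuclideanSpace.single j 1) j
        = ((EuclideanSpace.proj (𝕜 := ℝ) j).comp (fderiv ℝ (katoApprox ζ R f) x)) (e j) := rfl
      _ = fderiv ℝ (fun y : EuclideanSpace ℝ (Fin m) => katoApprox ζ R f y j) x (e j) := by rw [← h]; rfl
      _ = D j (e j) := by rw [(H j).fderiv]
  rw [hstart]
  show _ = z x * diverg f x + (∑ i, x i * fderiv ℝ z x (e i)) * katoQ m 0 (diverg f) x
  -- expand each D j (e j)
  have hDval : ∀ j, D j (e j)
      = z x * fderiv ℝ (fun w : EuclideanSpace ℝ (Fin m) => f w j) x (e j)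
        + f x j * fderiv ℝ z x (e j)
        + ((∑ i, x i * fderiv ℝ z x (e i)) * QL j x (e j)
          + fderiv ℝ z x (e j) * katoQ m 1 (fun w : EuclideanSpace ℝ (Fin m) => f w j) x
          - (∑ i, fderiv ℝ z x (e i) * (x j * QL i x (e j)))
          - (∑ i, fderiv ℝ z x (e i) * katoQ m 1 (fun w : EuclideanSpace ℝ (Fin m) => f w i) x)
          + ∑ i, (x i * katoQ m 1 (fun w : EuclideanSpace ℝ (Fin m) => f w j) x
              - x j * katoQ m 1 (fun w : EuclideanSpace ℝ (Fin m) => f w i) x) * Z2 i (e j)) := by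
    intro j
    rw [hDdef]
    simp only [ContinuousLinearMap.add_apply, ContinuousLinearMap.sub_apply,
      ContinuousLinearMap.smul_apply, ContinuousLinearMap.coe_sum', Finset.sum_apply,
      smul_eq_mul, PiLp.proj_apply, hedef, EuclideanSpace.single_apply, eq_self_iff_true,
      if_true, mul_one]
    rw [Finset.sum_congr rfl (fun i _ => show
      fderiv ℝ z x (EuclideanSpace.single i 1) *
          (x i * QL j x (EuclideanSpace.single j 1)
            + katoQ m 1 (fun w : EuclideanSpace ℝ (Fin m) => f w j) x * (if i = j then (1:ℝ) else 0)
            - (x j * QL i x (EuclideanSpace.single j 1)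
              + katoQ m 1 (fun w : EuclideanSpace ℝ (Fin m) => f w i) x))
        + (x i * katoQ m 1 (fun w : EuclideanSpace ℝ (Fin m) => f w j) x
            - x j * katoQ m 1 (fun w : EuclideanSpace ℝ (Fin m) => f w i) x)
          * Z2 i (EuclideanSpace.single j 1)
      = x i * fderiv ℝ z x (EuclideanSpace.single i 1) * QL j x (EuclideanSpace.single j 1)
        + (if i = j then fderiv ℝ z x (EuclideanSpace.single i 1)
            * katoQ m 1 (fun w : EuclideanSpace ℝ (Fin m) => f w j) x else 0)
        - fderiv ℝ z x (EuclideanSpace.single i 1) * (x j * QL i x (EuclideanSpace.single j 1))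
        - fderiv ℝ z x (EuclideanSpace.single i 1)
            * katoQ m 1 (fun w : EuclideanSpace ℝ (Fin m) => f w i) x
        + (x i * katoQ m 1 (fun w : EuclideanSpace ℝ (Fin m) => f w j) x
            - x j * katoQ m 1 (fun w : EuclideanSpace ℝ (Fin m) => f w i) x)
          * Z2 i (EuclideanSpace.single j 1)
      from by split_ifs <;> ring)]
    simp only [Finset.sum_add_distrib, Finset.sum_sub_distrib, Finset.sum_ite_eq',
      Finset.mem_univ, if_true, ← Finset.sum_mul]
  rw [Finset.sum_congr rfl fun j _ => hDval j]
  simp only [Finset.sum_add_distrib, Finset.sum_sub_distrib]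
  have e1 : ∑ j, z x * fderiv ℝ (fun w : EuclideanSpace ℝ (Fin m) => f w j) x (e j)
      = z x * diverg f x := by
    rw [← Finset.mul_sum, ← hdiv]
  have e3 : ∑ j, (∑ i, x i * fderiv ℝ z x (e i)) * QL j x (e j)
      = (∑ i, x i * fderiv ℝ z x (e i)) * katoQ m 0 (diverg f) x := by
    rw [← Finset.mul_sum, hc]
  have e5 : ∑ j, ∑ i, fderiv ℝ z x (e i) * (x j * QL i x (e j))
      = ∑ i, fderiv ℝ z x (e i) * f x i
        - ((m-1 : ℕ) : ℝ) * ∑ i, fderiv ℝ z x (e i)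
            * katoQ m 1 (fun w : EuclideanSpace ℝ (Fin m) => f w i) x := by
    rw [Finset.sum_comm]
    rw [Finset.sum_congr rfl fun i _ => show
        ∑ j, fderiv ℝ z x (e i) * (x j * QL i x (e j))
          = fderiv ℝ z x (e i) * f x i - ((m-1:ℕ):ℝ) * (fderiv ℝ z x (e i)
              * katoQ m 1 (fun w : EuclideanSpace ℝ (Fin m) => f w i) x) from by
      rw [← Finset.mul_sum, hd i]; ring]
    rw [Finset.sum_sub_distrib, ← Finset.mul_sum]
  have e6 : ∑ _j : Fin m, ∑ i, fderiv ℝ z x (e i)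
        * katoQ m 1 (fun w : EuclideanSpace ℝ (Fin m) => f w i) x
      = (m : ℝ) * ∑ i, fderiv ℝ z x (e i)
        * katoQ m 1 (fun w : EuclideanSpace ℝ (Fin m) => f w i) x := by
    rw [Finset.sum_const, Finset.card_univ, Fintype.card_fin, nsmul_eq_mul]
  have e7 : ∑ j, ∑ i, (x i * katoQ m 1 (fun w : EuclideanSpace ℝ (Fin m) => f w j) x
      - x j * katoQ m 1 (fun w : EuclideanSpace ℝ (Fin m) => f w i) x) * Z2 i (e j) = 0 := by
    have h2 : (∑ j, ∑ i, (x i * katoQ m 1 (fun w : EuclideanSpace ℝ (Fin m) => f w j) x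
        - x j * katoQ m 1 (fun w : EuclideanSpace ℝ (Fin m) => f w i) x) * Z2 i (e j))
        = - ∑ j, ∑ i, (x i * katoQ m 1 (fun w : EuclideanSpace ℝ (Fin m) => f w j) x
        - x j * katoQ m 1 (fun w : EuclideanSpace ℝ (Fin m) => f w i) x) * Z2 i (e j) := by
      conv_lhs => rw [Finset.sum_comm]
      rw [Finset.sum_congr rfl fun a _ => Finset.sum_congr rfl fun b _ => show
          (x a * katoQ m 1 (fun w : EuclideanSpace ℝ (Fin m) => f w b) x
            - x b * katoQ m 1 (fun w : EuclideanSpace ℝ (Fin m) => f w a) x) * Z2 a (e b)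
          = -((x b * katoQ m 1 (fun w : EuclideanSpace ℝ (Fin m) => f w a) x
            - x a * katoQ m 1 (fun w : EuclideanSpace ℝ (Fin m) => f w b) x) * Z2 b (e a)) from by
        rw [hsymm a b]; ring]
      simp only [Finset.sum_neg_distrib]
    linarith [h2]
  have e2 : ∑ j, f x j * fderiv ℝ z x (e j) = ∑ i, fderiv ℝ z x (e i) * f x i :=
    Finset.sum_congr rfl fun j _ => mul_comm _ _
  rw [e1, e3, e5, e6, e7, e2]
  have hcast : ((m-1 : ℕ) : ℝ) = (m : ℝ) - 1 := by
    have : 1 ≤ m := by omega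
    push_cast [this]
    ring
  rw [hcast]
  ring

end Main
end
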